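/- If U is a connected open subset of ℝⁿ and f, g : U → ℝ are real-analytic functions with cos(f(u)) = cos(g(u)) for all u ∈ U, then either there exists l ∈ ℤ with f − g ≡ 2lπ on U, or there exists l ∈ ℤ with f + g ≡ 2lπ on U. -/
import Mathlib

open Real

/-- `Real.sin` is real-analytic. -/
lemma analyticAt_rsin (x : ℝ) : AnalyticAt ℝ Real.sin x := by
  have hc : AnalyticAt ℂ Complex.sin (Complex.ofRealCLM x) :=
    (Complex.analyticOnNhd_univ_iff_differentiable.2 Complex.differentiable_sin) _ trivial
  have hcr : AnalyticAt ℝ Complex.sin (Complex.ofRealCLM x) := hc.restrictScalars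
  have heq : Real.sin = fun y : ℝ => Complex.reCLM (Complex.sin (Complex.ofRealCLM y)) := by
    funext y
    simp [Complex.sin_ofReal_re]
  rw [heq]
  exact (Complex.reCLM.analyticAt _).comp (hcr.comp (Complex.ofRealCLM.analyticAt x))

/-- Zero product of analytic functions on a connected open set: one factor vanishes. -/
lemma analytic_mul_eq_zero {E : Type*} [NormedAddCommGroup E] [NormedSpace ℝ E]
    {p q : E → ℝ} {U : Set E} (hUo : IsOpen U) (hU : IsPreconnected U)
    (hp : AnalyticOnNhd ℝ p U) (hq : AnalyticOnNhd ℝ q U)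
    (h : ∀ u ∈ U, p u * q u = 0) :
    (∀ u ∈ U, p u = 0) ∨ (∀ u ∈ U, q u = 0) := by
  by_cases hP : ∀ u ∈ U, p u = 0
  · exact Or.inl hP
  push_neg at hP
  obtain ⟨u₀, hu₀, hpu₀⟩ := hP
  right
  have hev : q =ᶠ[nhds u₀] 0 := by
    have h1 : ∀ᶠ z in nhds u₀, p z ≠ 0 := (hp u₀ hu₀).continuousAt.eventually_ne hpu₀
    have h2 : ∀ᶠ z in nhds u₀, z ∈ U := hUo.eventually_mem hu₀
    filter_upwards [h1, h2] with z hz1 hz2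
    rcases mul_eq_zero.1 (h z hz2) with h' | h'
    · exact absurd h' hz1
    · exact h'
  exact fun u hu => hq.eqOn_zero_of_preconnected_of_eventuallyEq_zero hU hu₀ hev hu

/-- A continuous function on a preconnected set taking values in `2πℤ` is constant. -/
lemma const_int_of_values {E : Type*} [TopologicalSpace E] {U : Set E}
    (hU : IsPreconnected U) (hne : U.Nonempty) {F : E → ℝ} (hF : ContinuousOn F U)
    (h : ∀ u ∈ U, ∃ k : ℤ, F u = 2 * k * π) :
    ∃ l : ℤ, ∀ u ∈ U, F u = 2 * l * π := by
  obtain ⟨u₀, hu₀⟩ := hne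
  obtain ⟨l, hl⟩ := h u₀ hu₀
  refine ⟨l, fun u hu => ?_⟩
  obtain ⟨k, hk⟩ := h u hu
  have himg : IsPreconnected (F '' U) := hU.image F hF
  have hord : (F '' U).OrdConnected := himg.ordConnected
  have hodd : ∀ m : ℤ, (2 * (m : ℝ) * π ≠ 2 * (l : ℝ) * π + π) ∧
      (2 * (m : ℝ) * π ≠ 2 * (l : ℝ) * π - π) := by
    intro m
    constructor <;> intro hm
    · have h2 : (2 * (m : ℝ)) * π = (2 * (l : ℝ) + 1) * π := by ring_nf; ring_nf at hm; linarith
      have h3 : (2 * (m : ℝ)) = 2 * (l : ℝ) + 1 := mul_right_cancel₀ pi_ne_zero h2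
      have h4 : (2 * m : ℤ) = 2 * l + 1 := by exact_mod_cast h3
      omega
    · have h2 : (2 * (m : ℝ)) * π = (2 * (l : ℝ) - 1) * π := by ring_nf; ring_nf at hm; linarith
      have h3 : (2 * (m : ℝ)) = 2 * (l : ℝ) - 1 := mul_right_cancel₀ pi_ne_zero h2
      have h4 : (2 * m : ℤ) = 2 * l - 1 := by exact_mod_cast h3
      omega
  rcases lt_trichotomy k l with hkl | hkl | hkl
  · -- 2lπ - π ∈ [2kπ, 2lπ] ⊆ F '' U
    have hmem : (2 * (l : ℝ) * π - π) ∈ Set.Icc (2 * (k : ℝ) * π) (2 * (l : ℝ) * π) := by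
      constructor
      · have : (k : ℝ) ≤ (l : ℝ) - 1 := by exact_mod_cast Int.le_sub_one_of_lt hkl
        nlinarith [pi_pos]
      · nlinarith [pi_pos]
    have h1 : (2 * (k : ℝ) * π) ∈ F '' U := ⟨u, hu, hk⟩
    have h2 : (2 * (l : ℝ) * π) ∈ F '' U := ⟨u₀, hu₀, hl⟩
    obtain ⟨v, hv, hvv⟩ := hord.out h1 h2 hmem
    obtain ⟨m, hm⟩ := h v hv
    exact absurd (hm ▸ hvv) (hodd m).2
  · rw [hk, hkl]
  · -- 2lπ + π ∈ [2lπ, 2kπ] ⊆ F '' U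
    have hmem : (2 * (l : ℝ) * π + π) ∈ Set.Icc (2 * (l : ℝ) * π) (2 * (k : ℝ) * π) := by
      constructor
      · nlinarith [pi_pos]
      · have : (l : ℝ) + 1 ≤ (k : ℝ) := by exact_mod_cast Int.add_one_le_of_lt hkl
        nlinarith [pi_pos]
    have h1 : (2 * (l : ℝ) * π) ∈ F '' U := ⟨u₀, hu₀, hl⟩
    have h2 : (2 * (k : ℝ) * π) ∈ F '' U := ⟨u, hu, hk⟩
    obtain ⟨v, hv, hvv⟩ := hord.out h1 h2 hmem
    obtain ⟨m, hm⟩ := h v hv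
    exact absurd (hm ▸ hvv) (hodd m).1

/-- for real-analytic `f, g` on a nonempty connected open set with
`cos ∘ f = cos ∘ g`, one global branch is selected. -/
theorem cos_eq_analytic_branch {n : ℕ} (U : Set (EuclideanSpace ℝ (Fin n)))
    (hUo : IsOpen U) (hUc : IsConnected U)
    (f g : EuclideanSpace ℝ (Fin n) → ℝ)
    (hf : AnalyticOnNhd ℝ f U) (hg : AnalyticOnNhd ℝ g U)
    (h : ∀ u ∈ U, Real.cos (f u) = Real.cos (g u)) :
    ∃ l : ℤ, (∀ u ∈ U, f u - g u = 2 * l * π) ∨ (∀ u ∈ U, f u + g u = 2 * l * π) := by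
  obtain ⟨hne, hUp⟩ := hUc
  set P : EuclideanSpace ℝ (Fin n) → ℝ := fun u => Real.sin ((f u + g u) / 2) with hP
  set Q : EuclideanSpace ℝ (Fin n) → ℝ := fun u => Real.sin ((f u - g u) / 2) with hQ
  have hPa : AnalyticOnNhd ℝ P U := fun u hu =>
    (analyticAt_rsin _).comp ((((hf u hu).add (hg u hu)).div analyticAt_const two_ne_zero))
  have hQa : AnalyticOnNhd ℝ Q U := fun u hu =>
    (analyticAt_rsin _).comp ((((hf u hu).sub (hg u hu)).div analyticAt_const two_ne_zero))
  have hPQ : ∀ u ∈ U, P u * Q u = 0 := by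
    intro u hu
    have := h u hu
    have hc : Real.cos (f u) - Real.cos (g u) = 0 := by rw [this]; ring
    rw [Real.cos_sub_cos] at hc
    simp only [hP, hQ]
    linarith
  rcases analytic_mul_eq_zero hUo hUp hPa hQa hPQ with hPz | hQz
  · -- sin((f+g)/2) = 0 on U
    have hval : ∀ u ∈ U, ∃ k : ℤ, f u + g u = 2 * k * π := by
      intro u hu
      obtain ⟨m, hm⟩ := Real.sin_eq_zero_iff.1 (hPz u hu)
      exact ⟨m, by linarith⟩
    have hcont : ContinuousOn (fun u => f u + g u) U :=
      (fun u hu => ((hf u hu).continuousAt.add (hg u hu).continuousAt).continuousWithinAt)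
    obtain ⟨l, hl⟩ := const_int_of_values hUp hne hcont hval
    exact ⟨l, Or.inr hl⟩
  · have hval : ∀ u ∈ U, ∃ k : ℤ, f u - g u = 2 * k * π := by
      intro u hu
      obtain ⟨m, hm⟩ := Real.sin_eq_zero_iff.1 (hQz u hu)
      exact ⟨m, by linarith⟩
    have hcont : ContinuousOn (fun u => f u - g u) U :=
      (fun u hu => ((hf u hu).continuousAt.sub (hg u hu).continuousAt).continuousWithinAt)
    obtain ⟨l, hl⟩ := const_int_of_values hUp hne hcont hval
    exact ⟨l, Or.inl hl⟩
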